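/- arXiv:1911.00026 — 3 statements merged into one kernel-verified Lean document; each statement's English description precedes it below -/
import Mathlib

section
/- Let A ∈ ℝ^{m×n}, b ∈ ℝ^m, c ∈ ℝⁿ, x̃ ∈ ℝⁿ, r̃ = b − Ax̃, h = Aᵀ(b − Ax̃) + c, and let θ₁, θ₂ > 0. Define K = (‖r̃‖² + θ₂⁻²)I_n + (‖x̃‖² + θ₁⁻²)AᵀA − Aᵀr̃x̃ᵀ − x̃r̃ᵀA. Then K is symmetric positive definite, and the minimum of sqrt(‖E‖_F² + θ₁²‖f‖² + θ₂²‖g‖²) over all triples (E, f, g) ∈ ℝ^{m×n} × ℝ^m × ℝⁿ satisfying the linearized constraint h + Eᵀr̃ − AᵀEx̃ + Aᵀf + g = 0 exists and equals sqrt(hᵀK⁻¹h). -/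
open Matrix

/-- Euclidean norm of a vector. -/
noncomputable def euclNorm {k : Type*} [Fintype k] (v : k → ℝ) : ℝ :=
  Real.sqrt (∑ i, v i ^ 2)

/-- Frobenius norm of a matrix. -/
noncomputable def frobNorm {k l : Type*} [Fintype k] [Fintype l]
    (M : Matrix k l ℝ) : ℝ :=
  Real.sqrt (∑ i, ∑ j, M i j ^ 2)

lemma euclNorm_sq {k : Type*} [Fintype k] (v : k → ℝ) :
    euclNorm v ^ 2 = ∑ i, v i ^ 2 := by
  rw [euclNorm, Real.sq_sqrt (by positivity)]

lemma frobNorm_sq {k l : Type*} [Fintype k] [Fintype l] (M : Matrix k l ℝ) :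
    frobNorm M ^ 2 = ∑ i, ∑ j, M i j ^ 2 := by
  rw [frobNorm, Real.sq_sqrt (Finset.sum_nonneg fun i _ => by positivity)]

lemma sq_expand1 {ι : Type*} [Fintype ι] (u v : ι → ℝ) :
    ∑ i, (u i + v i) ^ 2
      = (∑ i, u i ^ 2) + 2 * (∑ i, u i * v i) + ∑ i, v i * v i := by
  rw [Finset.mul_sum, ← Finset.sum_add_distrib, ← Finset.sum_add_distrib]
  exact Finset.sum_congr rfl fun i _ => by ring

lemma sq_expand2 {ι κ : Type*} [Fintype ι] [Fintype κ] (u v : ι → κ → ℝ) :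
    ∑ i, ∑ j, (u i j + v i j) ^ 2
      = (∑ i, ∑ j, u i j ^ 2) + 2 * (∑ i, ∑ j, u i j * v i j)
        + ∑ i, ∑ j, v i j * v i j := by
  rw [Finset.mul_sum, ← Finset.sum_add_distrib, ← Finset.sum_add_distrib]
  exact Finset.sum_congr rfl fun i _ => sq_expand1 _ _

/-- Bridge between entrywise and vector forms. -/
lemma bridge {m n : ℕ} (A E : Matrix (Fin m) (Fin n) ℝ) (rt : Fin m → ℝ)
    (xt y : Fin n → ℝ) :
    (∑ i, ∑ j, E i j * (rt i * y j - (A *ᵥ y) i * xt j))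
      = rt ⬝ᵥ (E *ᵥ y) - (A *ᵥ y) ⬝ᵥ (E *ᵥ xt) := by
  simp only [dotProduct, mulVec, Finset.mul_sum, ← Finset.sum_sub_distrib]
  exact Finset.sum_congr rfl fun i _ =>
    Finset.sum_congr rfl fun j _ => by ring

/-- Adjoint identity. -/
lemma adjId {m n : ℕ} (A E : Matrix (Fin m) (Fin n) ℝ) (rt f : Fin m → ℝ)
    (xt g y : Fin n → ℝ) :
    (Eᵀ *ᵥ rt - Aᵀ *ᵥ (E *ᵥ xt) + Aᵀ *ᵥ f + g) ⬝ᵥ y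
      = (∑ i, ∑ j, E i j * (rt i * y j - (A *ᵥ y) i * xt j))
        + (∑ i, f i * (A *ᵥ y) i) + (∑ j, g j * y j) := by
  rw [bridge]
  rw [add_dotProduct, add_dotProduct, sub_dotProduct, mulVec_transpose,
    mulVec_transpose, mulVec_transpose, ← dotProduct_mulVec, ← dotProduct_mulVec,
    ← dotProduct_mulVec]
  rw [dotProduct_comm (E *ᵥ xt) (A *ᵥ y)]
  rfl

lemma transpose_vecMulVec {m n : ℕ} (u : Fin m → ℝ) (v : Fin n → ℝ) :
    (vecMulVec u v)ᵀ = vecMulVec v u := by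
  ext i j; simp [vecMulVec, mul_comm]

lemma vecMulVec_mulVec' {m n : ℕ} (u : Fin m → ℝ) (v w : Fin n → ℝ) :
    (vecMulVec u v) *ᵥ w = (v ⬝ᵥ w) • u := by
  funext i
  simp only [vecMulVec, mulVec, dotProduct, Pi.smul_apply, smul_eq_mul, of_apply,
    Finset.sum_mul, Finset.mul_sum]
  exact Finset.sum_congr rfl fun j _ => by ring

/-- first part of Lemma 3.5: linearized estimate of the backward error.
With `r̃ = b − Ax̃`, `h = Aᵀ(b − Ax̃) + c` and
`K = (‖r̃‖² + θ₂⁻²)I_n + (‖x̃‖² + θ₁⁻²)AᵀA − Aᵀr̃x̃ᵀ − x̃r̃ᵀA`, the matrix `K` is symmetric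
positive definite, and the minimum of `sqrt(‖E‖_F² + θ₁²‖f‖² + θ₂²‖g‖²)` over the triples
`(E, f, g)` satisfying the linearized constraint `h + Eᵀr̃ − AᵀEx̃ + Aᵀf + g = 0` exists and
equals `sqrt(hᵀK⁻¹h)`. -/
theorem stmt8 {m n : ℕ}
    (A : Matrix (Fin m) (Fin n) ℝ) (b : Fin m → ℝ) (c : Fin n → ℝ) (xt : Fin n → ℝ)
    (θ₁ θ₂ : ℝ) (hθ₁ : 0 < θ₁) (hθ₂ : 0 < θ₂)
    (rt : Fin m → ℝ) (hrt : rt = b - A *ᵥ xt)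
    (h : Fin n → ℝ) (hh : h = Aᵀ *ᵥ (b - A *ᵥ xt) + c)
    (K : Matrix (Fin n) (Fin n) ℝ)
    (hK : K = (euclNorm rt ^ 2 + θ₂⁻¹ ^ 2) • (1 : Matrix (Fin n) (Fin n) ℝ)
        + (euclNorm xt ^ 2 + θ₁⁻¹ ^ 2) • (Aᵀ * A)
        - Aᵀ * vecMulVec rt xt - vecMulVec xt rt * A) :
    K.PosDef ∧
    IsLeast {t : ℝ | ∃ (E : Matrix (Fin m) (Fin n) ℝ) (f : Fin m → ℝ) (g : Fin n → ℝ),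
        h + Eᵀ *ᵥ rt - Aᵀ *ᵥ (E *ᵥ xt) + Aᵀ *ᵥ f + g = 0 ∧
        t = Real.sqrt (frobNorm E ^ 2 + θ₁ ^ 2 * euclNorm f ^ 2 + θ₂ ^ 2 * euclNorm g ^ 2)}
      (Real.sqrt (h ⬝ᵥ (K⁻¹ *ᵥ h))) := by
  have hθ₁' : θ₁ ≠ 0 := hθ₁.ne'
  have hθ₂' : θ₂ ≠ 0 := hθ₂.ne'
  -- T(T* y) = K y
  have TTstar : ∀ y : Fin n → ℝ,
      (vecMulVec rt y - vecMulVec (A *ᵥ y) xt)ᵀ *ᵥ rt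
        - Aᵀ *ᵥ ((vecMulVec rt y - vecMulVec (A *ᵥ y) xt) *ᵥ xt)
        + Aᵀ *ᵥ (θ₁⁻¹ ^ 2 • (A *ᵥ y)) + θ₂⁻¹ ^ 2 • y = K *ᵥ y := by
    intro y
    rw [hK]
    simp only [transpose_sub, _root_.transpose_vecMulVec, sub_mulVec, add_mulVec,
      mulVec_sub, mulVec_add, smul_mulVec, one_mulVec, ← mulVec_mulVec,
      vecMulVec_mulVec', mulVec_smul, euclNorm_sq]
    have h1 : rt ⬝ᵥ rt = ∑ i, rt i ^ 2 := by
      simp [dotProduct, sq]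
    have h2 : xt ⬝ᵥ xt = ∑ i, xt i ^ 2 := by
      simp [dotProduct, sq]
    have h3 : (A *ᵥ y) ⬝ᵥ rt = rt ⬝ᵥ (A *ᵥ y) := dotProduct_comm _ _
    have h4 : y ⬝ᵥ xt = xt ⬝ᵥ y := dotProduct_comm _ _
    rw [h1, h2, h3, h4]
    module
  -- quadratic form identity
  have hquad : ∀ y : Fin n → ℝ, (K *ᵥ y) ⬝ᵥ y
      = (∑ i, ∑ j, (rt i * y j - (A *ᵥ y) i * xt j) * (rt i * y j - (A *ᵥ y) i * xt j))
        + θ₁⁻¹ ^ 2 * (∑ i, (A *ᵥ y) i * (A *ᵥ y) i)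
        + θ₂⁻¹ ^ 2 * (∑ j, y j * y j) := by
    intro y
    rw [← TTstar y, adjId]
    have eE : (∑ i, ∑ j, (vecMulVec rt y - vecMulVec (A *ᵥ y) xt) i j
          * (rt i * y j - (A *ᵥ y) i * xt j))
        = ∑ i, ∑ j, (rt i * y j - (A *ᵥ y) i * xt j)
          * (rt i * y j - (A *ᵥ y) i * xt j) :=
      Finset.sum_congr rfl fun i _ => Finset.sum_congr rfl fun j _ => by
        simp [vecMulVec]
    have ef : (∑ i, (θ₁⁻¹ ^ 2 • (A *ᵥ y)) i * (A *ᵥ y) i)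
        = θ₁⁻¹ ^ 2 * ∑ i, (A *ᵥ y) i * (A *ᵥ y) i := by
      rw [Finset.mul_sum]
      exact Finset.sum_congr rfl fun i _ => by simp [mul_assoc]
    have eg : (∑ j, (θ₂⁻¹ ^ 2 • y) j * y j)
        = θ₂⁻¹ ^ 2 * ∑ j, y j * y j := by
      rw [Finset.mul_sum]
      exact Finset.sum_congr rfl fun j _ => by simp [mul_assoc]
    rw [eE, ef, eg]
  -- positive definiteness
  have hPD : K.PosDef := by
    refine posDef_iff_dotProduct_mulVec.mpr ⟨?_, ?_⟩
    · show Kᴴ = K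
      rw [conjTranspose_eq_transpose_of_trivial, hK]
      simp only [transpose_sub, transpose_add, transpose_smul, transpose_mul,
        transpose_one, transpose_transpose, _root_.transpose_vecMulVec]
      rw [sub_sub, sub_sub, add_comm (Aᵀ * vecMulVec rt xt)]
    · intro x hx
      obtain ⟨j, hj⟩ : ∃ j, x j ≠ 0 := Function.ne_iff.mp hx
      have hx' : 0 < ∑ j, x j * x j :=
        Finset.sum_pos' (fun i _ => mul_self_nonneg _)
          ⟨j, Finset.mem_univ j, mul_self_pos.mpr hj⟩
      have hstar : star x = x := by
        funext i; simp
      rw [hstar, dotProduct_comm, hquad x]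
      have n1 : 0 ≤ ∑ i, ∑ j, (rt i * x j - (A *ᵥ x) i * xt j) * (rt i * x j - (A *ᵥ x) i * xt j) :=
        Finset.sum_nonneg fun i _ => Finset.sum_nonneg fun j _ => mul_self_nonneg _
      have n2 : 0 ≤ θ₁⁻¹ ^ 2 * ∑ i, (A *ᵥ x) i * (A *ᵥ x) i :=
        mul_nonneg (by positivity) (Finset.sum_nonneg fun i _ => mul_self_nonneg _)
      have n3 : 0 < θ₂⁻¹ ^ 2 * ∑ j, x j * x j :=
        mul_pos (pow_pos (inv_pos.mpr hθ₂) 2) hx'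
      linarith
  refine ⟨hPD, ?_⟩
  have hdet : IsUnit K.det := isUnit_iff_ne_zero.mpr hPD.det_pos.ne'
  set y₀ := K⁻¹ *ᵥ h with hy₀
  have hKy₀ : K *ᵥ y₀ = h := by
    rw [hy₀, mulVec_mulVec, Matrix.mul_nonsing_inv _ hdet, one_mulVec]
  have hval : h ⬝ᵥ y₀
      = (∑ i, ∑ j, (rt i * y₀ j - (A *ᵥ y₀) i * xt j) * (rt i * y₀ j - (A *ᵥ y₀) i * xt j))
        + θ₁⁻¹ ^ 2 * (∑ i, (A *ᵥ y₀) i * (A *ᵥ y₀) i)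
        + θ₂⁻¹ ^ 2 * (∑ j, y₀ j * y₀ j) := by
    conv_lhs => rw [← hKy₀]
    exact hquad y₀
  constructor
  · -- membership: the minimum is attained
    refine ⟨vecMulVec (A *ᵥ y₀) xt - vecMulVec rt y₀,
      -(θ₁⁻¹ ^ 2 • (A *ᵥ y₀)), -(θ₂⁻¹ ^ 2 • y₀), ?_, ?_⟩
    · -- constraint
      have key := TTstar y₀
      rw [hKy₀] at key
      funext i
      have keyi := congrFun key i
      simp only [Pi.add_apply, Pi.sub_apply, Pi.neg_apply, Pi.smul_apply,
        smul_eq_mul, transpose_sub, sub_mulVec, mulVec_sub, mulVec_neg,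
        Pi.zero_apply] at keyi ⊢
      linarith
    · -- value
      refine (congrArg Real.sqrt ?_).symm
      rw [frobNorm_sq, euclNorm_sq, euclNorm_sq, hval]
      have a1 : (∑ i, ∑ j, (vecMulVec (A *ᵥ y₀) xt - vecMulVec rt y₀) i j ^ 2)
          = ∑ i, ∑ j, (rt i * y₀ j - (A *ᵥ y₀) i * xt j)
            * (rt i * y₀ j - (A *ᵥ y₀) i * xt j) :=
        Finset.sum_congr rfl fun i _ => Finset.sum_congr rfl fun j _ => by
          simp [vecMulVec]; ring
      have a2 : θ₁ ^ 2 * (∑ i, (-(θ₁⁻¹ ^ 2 • (A *ᵥ y₀))) i ^ 2)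
          = θ₁⁻¹ ^ 2 * (∑ i, (A *ᵥ y₀) i * (A *ᵥ y₀) i) := by
        rw [Finset.mul_sum, Finset.mul_sum]
        refine Finset.sum_congr rfl fun i _ => ?_
        simp only [Pi.neg_apply, Pi.smul_apply, smul_eq_mul]
        field_simp
      have a3 : θ₂ ^ 2 * (∑ j, (-(θ₂⁻¹ ^ 2 • y₀)) j ^ 2)
          = θ₂⁻¹ ^ 2 * (∑ j, y₀ j * y₀ j) := by
        rw [Finset.mul_sum, Finset.mul_sum]
        refine Finset.sum_congr rfl fun j _ => ?_
        simp only [Pi.neg_apply, Pi.smul_apply, smul_eq_mul]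
        field_simp
      linarith
  · -- lower bound
    rintro t ⟨E, f, g, hcon, ht⟩
    rw [ht]
    apply Real.sqrt_le_sqrt
    rw [frobNorm_sq, euclNorm_sq, euclNorm_sq]
    have hT : Eᵀ *ᵥ rt - Aᵀ *ᵥ (E *ᵥ xt) + Aᵀ *ᵥ f + g = -h := by
      funext i
      have := congrFun hcon i
      simp only [Pi.add_apply, Pi.sub_apply, Pi.neg_apply, Pi.zero_apply] at this ⊢
      linarith
    have hcross : (∑ i, ∑ j, E i j * (rt i * y₀ j - (A *ᵥ y₀) i * xt j))
        + (∑ i, f i * (A *ᵥ y₀) i) + (∑ j, g j * y₀ j) = -(h ⬝ᵥ y₀) := by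
      rw [← adjId, hT, neg_dotProduct]
    have p1 : 0 ≤ (∑ i, ∑ j, E i j ^ 2)
        + 2 * (∑ i, ∑ j, E i j * (rt i * y₀ j - (A *ᵥ y₀) i * xt j))
        + ∑ i, ∑ j, (rt i * y₀ j - (A *ᵥ y₀) i * xt j)
          * (rt i * y₀ j - (A *ᵥ y₀) i * xt j) := by
      rw [← sq_expand2 (fun i j => E i j)]
      exact Finset.sum_nonneg fun i _ => Finset.sum_nonneg fun j _ => sq_nonneg _
    have p2 : 0 ≤ (∑ i, f i ^ 2)
        + 2 * (∑ i, f i * (θ₁⁻¹ ^ 2 * (A *ᵥ y₀) i))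
        + ∑ i, (θ₁⁻¹ ^ 2 * (A *ᵥ y₀) i) * (θ₁⁻¹ ^ 2 * (A *ᵥ y₀) i) := by
      rw [← sq_expand1]
      exact Finset.sum_nonneg fun i _ => sq_nonneg _
    have p3 : 0 ≤ (∑ j, g j ^ 2)
        + 2 * (∑ j, g j * (θ₂⁻¹ ^ 2 * y₀ j))
        + ∑ j, (θ₂⁻¹ ^ 2 * y₀ j) * (θ₂⁻¹ ^ 2 * y₀ j) := by
      rw [← sq_expand1]
      exact Finset.sum_nonneg fun j _ => sq_nonneg _
    have c2 : (∑ i, f i * (θ₁⁻¹ ^ 2 * (A *ᵥ y₀) i))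
        = θ₁⁻¹ ^ 2 * ∑ i, f i * (A *ᵥ y₀) i := by
      rw [Finset.mul_sum]; exact Finset.sum_congr rfl fun i _ => by ring
    have d2 : (∑ i, (θ₁⁻¹ ^ 2 * (A *ᵥ y₀) i) * (θ₁⁻¹ ^ 2 * (A *ᵥ y₀) i))
        = θ₁⁻¹ ^ 2 * (θ₁⁻¹ ^ 2 * ∑ i, (A *ᵥ y₀) i * (A *ᵥ y₀) i) := by
      rw [Finset.mul_sum, Finset.mul_sum]
      exact Finset.sum_congr rfl fun i _ => by ring
    have c3 : (∑ j, g j * (θ₂⁻¹ ^ 2 * y₀ j)) = θ₂⁻¹ ^ 2 * ∑ j, g j * y₀ j := by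
      rw [Finset.mul_sum]; exact Finset.sum_congr rfl fun j _ => by ring
    have d3 : (∑ j, (θ₂⁻¹ ^ 2 * y₀ j) * (θ₂⁻¹ ^ 2 * y₀ j))
        = θ₂⁻¹ ^ 2 * (θ₂⁻¹ ^ 2 * ∑ j, y₀ j * y₀ j) := by
      rw [Finset.mul_sum, Finset.mul_sum]
      exact Finset.sum_congr rfl fun j _ => by ring
    rw [c2, d2] at p2
    rw [c3, d3] at p3
    -- multiply p2 by θ₁², p3 by θ₂²
    have p2' : 0 ≤ θ₁ ^ 2 * (∑ i, f i ^ 2) + 2 * (∑ i, f i * (A *ᵥ y₀) i)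
        + θ₁⁻¹ ^ 2 * ∑ i, (A *ᵥ y₀) i * (A *ᵥ y₀) i := by
      have h0 := mul_nonneg (sq_nonneg θ₁) p2
      have hid : θ₁ ^ 2 * ((∑ i, f i ^ 2)
          + 2 * (θ₁⁻¹ ^ 2 * ∑ i, f i * (A *ᵥ y₀) i)
          + θ₁⁻¹ ^ 2 * (θ₁⁻¹ ^ 2 * ∑ i, (A *ᵥ y₀) i * (A *ᵥ y₀) i))
          = θ₁ ^ 2 * (∑ i, f i ^ 2) + 2 * (∑ i, f i * (A *ᵥ y₀) i)
          + θ₁⁻¹ ^ 2 * ∑ i, (A *ᵥ y₀) i * (A *ᵥ y₀) i := by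
        field_simp
      linarith [h0, hid.symm.le, hid.le]
    have p3' : 0 ≤ θ₂ ^ 2 * (∑ j, g j ^ 2) + 2 * (∑ j, g j * y₀ j)
        + θ₂⁻¹ ^ 2 * ∑ j, y₀ j * y₀ j := by
      have h0 := mul_nonneg (sq_nonneg θ₂) p3
      have hid : θ₂ ^ 2 * ((∑ j, g j ^ 2)
          + 2 * (θ₂⁻¹ ^ 2 * ∑ j, g j * y₀ j)
          + θ₂⁻¹ ^ 2 * (θ₂⁻¹ ^ 2 * ∑ j, y₀ j * y₀ j))
          = θ₂ ^ 2 * (∑ j, g j ^ 2) + 2 * (∑ j, g j * y₀ j)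
          + θ₂⁻¹ ^ 2 * ∑ j, y₀ j * y₀ j := by
        field_simp
      linarith [h0, hid.symm.le, hid.le]
    linarith [p1, p2', p3', hcross, hval]
end

section
/- Let A ∈ ℝ^{m×n} have full column rank n, b ∈ ℝ^m, c ∈ ℝⁿ. Let x be the solution of AᵀAx = Aᵀb + c, let w = (AᵀA)⁻¹c, and for ε > 0 let x_ε be the solution of (AᵀA + ε²ccᵀ)x_ε = Aᵀb + c. Then x_ε = x − (ε²cᵀx/(1 + ε²cᵀw)) w; consequently ‖x_ε − x‖ ≤ (ε²‖c‖‖w‖/(1 + ε²cᵀw)) ‖x‖, and x_ε → x as ε → 0. -/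
open Matrix Filter Topology

lemma euclNorm_eq {k : Type*} [Fintype k] (v : k → ℝ) :
    euclNorm v = ‖(WithLp.equiv 2 (k → ℝ)).symm v‖ := by
  rw [EuclideanSpace.norm_eq, euclNorm]
  congr 1
  refine Finset.sum_congr rfl fun i _ => ?_
  rw [Real.norm_eq_abs, sq_abs]
  rfl

lemma euclNorm_smul {k : Type*} [Fintype k] (a : ℝ) (v : k → ℝ) :
    euclNorm (a • v) = |a| * euclNorm v := by
  rw [euclNorm_eq, euclNorm_eq]
  have : (WithLp.equiv 2 (k → ℝ)).symm (a • v) = a • (WithLp.equiv 2 (k → ℝ)).symm v := rfl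
  rw [this, norm_smul, Real.norm_eq_abs]

lemma euclNorm_nonneg {k : Type*} [Fintype k] (v : k → ℝ) : 0 ≤ euclNorm v :=
  Real.sqrt_nonneg _

lemma abs_dot_le {k : Type*} [Fintype k] (v u : k → ℝ) :
    |v ⬝ᵥ u| ≤ euclNorm v * euclNorm u := by
  rw [euclNorm_eq, euclNorm_eq]
  have h := abs_real_inner_le_norm ((WithLp.equiv 2 (k → ℝ)).symm v)
      ((WithLp.equiv 2 (k → ℝ)).symm u)
  have he : (inner ℝ ((WithLp.equiv 2 (k → ℝ)).symm v) ((WithLp.equiv 2 (k → ℝ)).symm u) : ℝ)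
      = v ⬝ᵥ u := by
    rw [PiLp.inner_apply]
    simp [dotProduct, RCLike.inner_apply, mul_comm]
  rwa [he] at h

lemma vecMulVec_mulVec'_s12 {k : Type*} [Fintype k] [DecidableEq k] (c y : k → ℝ) :
    (vecMulVec c c) *ᵥ y = (c ⬝ᵥ y) • c := by
  ext i
  simp [vecMulVec_apply, mulVec, dotProduct, Finset.mul_sum, mul_comm, mul_assoc, mul_left_comm]

/-- Lemma 5.2: convergence of the CGLSε regularized solution. Let `x` solve
`AᵀAx = Aᵀb + c`, `w = (AᵀA)⁻¹c`, and for `ε > 0` let `x_ε` solve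
`(AᵀA + ε²ccᵀ)x_ε = Aᵀb + c`. Then `x_ε = x − (ε²cᵀx/(1 + ε²cᵀw))w`, hence
`‖x_ε − x‖ ≤ (ε²‖c‖‖w‖/(1 + ε²cᵀw))‖x‖`, and `x_ε → x` as `ε → 0⁺`. -/
theorem stmt12 {m n : ℕ} (hn : 0 < n) (hmn : n ≤ m)
    (A : Matrix (Fin m) (Fin n) ℝ) (hA : A.rank = n)
    (b : Fin m → ℝ) (c : Fin n → ℝ)
    (x : Fin n → ℝ) (hx : (Aᵀ * A) *ᵥ x = Aᵀ *ᵥ b + c)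
    (w : Fin n → ℝ) (hw : w = (Aᵀ * A)⁻¹ *ᵥ c)
    (xe : ℝ → (Fin n → ℝ))
    (hxe : ∀ ε : ℝ, 0 < ε → (Aᵀ * A + ε ^ 2 • vecMulVec c c) *ᵥ xe ε = Aᵀ *ᵥ b + c) :
    (∀ ε : ℝ, 0 < ε →
      xe ε = x - (ε ^ 2 * (c ⬝ᵥ x) / (1 + ε ^ 2 * (c ⬝ᵥ w))) • w ∧
      euclNorm (xe ε - x) ≤
        ε ^ 2 * euclNorm c * euclNorm w / (1 + ε ^ 2 * (c ⬝ᵥ w)) * euclNorm x) ∧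
    Tendsto xe (nhdsWithin 0 (Set.Ioi 0)) (nhds x) := by
  set M := Aᵀ * A with hM
  -- A has trivial kernel
  have hker : LinearMap.ker A.mulVecLin = ⊥ := by
    have h1 := A.mulVecLin.finrank_range_add_finrank_ker
    rw [show Module.finrank ℝ (LinearMap.range A.mulVecLin) = A.rank from rfl, hA] at h1
    have h2 : Module.finrank ℝ (Fin n → ℝ) = n := by simp
    rw [h2] at h1
    have : Module.finrank ℝ (LinearMap.ker A.mulVecLin) = 0 := by omega
    exact Submodule.finrank_eq_zero.mp this
  have hAinj : ∀ v : Fin n → ℝ, A *ᵥ v = 0 → v = 0 := by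
    intro v hv
    have : v ∈ LinearMap.ker A.mulVecLin := by simpa [Matrix.mulVecLin_apply] using hv
    simpa [hker] using this
  -- M is positive definite
  have hMpd : M.PosDef := by
    refine Matrix.PosDef.of_dotProduct_mulVec_pos (Matrix.isHermitian_conjTranspose_mul_self A) fun v hv => ?_
    have h1 : star v ⬝ᵥ (M *ᵥ v) = (A *ᵥ v) ⬝ᵥ (A *ᵥ v) := by
      rw [star_trivial, hM, ← Matrix.mulVec_mulVec, Matrix.dotProduct_mulVec,
        Matrix.vecMul_transpose]
    rw [h1]
    have hAv : A *ᵥ v ≠ 0 := fun h => hv (hAinj v h)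
    have : 0 < (A *ᵥ v) ⬝ᵥ (A *ᵥ v) := by
      rcases Function.ne_iff.mp hAv with ⟨i, hi⟩
      have : (0:ℝ) < ∑ j, (A *ᵥ v) j * (A *ᵥ v) j := by
        apply Finset.sum_pos' (fun j _ => mul_self_nonneg _)
        exact ⟨i, Finset.mem_univ i, mul_self_pos.mpr hi⟩
      simpa [dotProduct] using this
    exact this
  have hMunit : IsUnit M := hMpd.isUnit
  have hMdet : IsUnit M.det := (Matrix.isUnit_iff_isUnit_det M).mp hMunit
  have hMw : M *ᵥ w = c := by
    rw [hw, Matrix.mulVec_mulVec, Matrix.mul_nonsing_inv M hMdet, Matrix.one_mulVec]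
  -- c ⬝ᵥ w ≥ 0
  have hcw : 0 ≤ c ⬝ᵥ w := by
    have := (hMpd.inv).posSemidef.dotProduct_mulVec_nonneg c
    rw [star_trivial] at this
    rwa [hw]
  -- positive semidefinite perturbation
  have hccsd : ∀ ε : ℝ, (ε ^ 2 • vecMulVec c c).PosSemidef := by
    intro ε
    refine Matrix.PosSemidef.of_dotProduct_mulVec_nonneg ?_ ?_
    · show _ᴴ = _
      ext i j
      simp only [Matrix.conjTranspose_apply, Matrix.smul_apply, vecMulVec_apply, star_trivial,
        smul_eq_mul]
      ring
    · intro v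
      rw [star_trivial, Matrix.smul_mulVec, vecMulVec_mulVec'_s12, dotProduct_smul,
        dotProduct_smul, smul_eq_mul, smul_eq_mul, dotProduct_comm v c]
      exact mul_nonneg (sq_nonneg ε) (mul_self_nonneg _)
  have key : ∀ ε : ℝ, 0 < ε →
      xe ε = x - (ε ^ 2 * (c ⬝ᵥ x) / (1 + ε ^ 2 * (c ⬝ᵥ w))) • w := by
    intro ε hε
    set D : ℝ := 1 + ε ^ 2 * (c ⬝ᵥ w) with hD
    have hDpos : 0 < D := by
      have := mul_nonneg (sq_nonneg ε) hcw
      simp only [hD]; linarith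
    set k : ℝ := ε ^ 2 * (c ⬝ᵥ x) / D with hk
    set y : Fin n → ℝ := x - k • w with hy
    have hMe : (M + ε ^ 2 • vecMulVec c c).PosDef := hMpd.add_posSemidef (hccsd ε)
    have hinj : Function.Injective (M + ε ^ 2 • vecMulVec c c).mulVec :=
      Matrix.mulVec_injective_iff_isUnit.mpr hMe.isUnit
    have hcy : c ⬝ᵥ y = c ⬝ᵥ x - k * (c ⬝ᵥ w) := by
      rw [hy, dotProduct_sub, dotProduct_smul, smul_eq_mul]
    have hsolve : (M + ε ^ 2 • vecMulVec c c) *ᵥ y = Aᵀ *ᵥ b + c := by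
      rw [Matrix.add_mulVec, Matrix.smul_mulVec, vecMulVec_mulVec'_s12]
      rw [hy, Matrix.mulVec_sub, Matrix.mulVec_smul, hMw, hx]
      have hkD : k * D = ε ^ 2 * (c ⬝ᵥ x) := by
        rw [hk]; field_simp
      have hcoef : (-k : ℝ) + ε ^ 2 * (c ⬝ᵥ x - k * (c ⬝ᵥ w)) = 0 := by
        have : ε ^ 2 * (c ⬝ᵥ x) - k * D = 0 := by rw [hkD]; ring
        rw [hD] at this
        nlinarith [this]
      funext i
      have hcy' : c ⬝ᵥ (x - k • w) = c ⬝ᵥ x - k * (c ⬝ᵥ w) := by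
        rw [dotProduct_sub, dotProduct_smul, smul_eq_mul]
      simp only [Pi.add_apply, Pi.sub_apply, Pi.smul_apply, smul_eq_mul, hcy']
      linear_combination (c i) * hcoef
    have := hinj (hsolve.trans (hxe ε hε).symm)
    exact this.symm
  refine ⟨fun ε hε => ⟨key ε hε, ?_⟩, ?_⟩
  · -- norm bound
    set D : ℝ := 1 + ε ^ 2 * (c ⬝ᵥ w) with hD
    have hDpos : 0 < D := by
      have := mul_nonneg (sq_nonneg ε) hcw
      simp only [hD]; linarith
    set k : ℝ := ε ^ 2 * (c ⬝ᵥ x) / D with hk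
    have hdiff : xe ε - x = (-k) • w := by
      rw [key ε hε]; funext i; simp [hk, hD]
    rw [hdiff, euclNorm_smul, abs_neg, abs_div, abs_of_pos hDpos]
    have h1 : |ε ^ 2 * (c ⬝ᵥ x)| = ε ^ 2 * |c ⬝ᵥ x| := by
      rw [abs_mul, abs_of_pos (by positivity : (0:ℝ) < ε ^ 2)]
    rw [h1]
    have h2 : |c ⬝ᵥ x| ≤ euclNorm c * euclNorm x := abs_dot_le c x
    have hwn := euclNorm_nonneg w
    have hxn := euclNorm_nonneg x
    have hcn := euclNorm_nonneg c
    rw [div_mul_eq_mul_div, div_mul_eq_mul_div, div_le_div_iff₀ hDpos hDpos]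
    nlinarith [h2, euclNorm_nonneg w, sq_nonneg ε, mul_le_mul_of_nonneg_left h2
      (by positivity : (0:ℝ) ≤ ε ^ 2 * euclNorm w), hDpos]
  · -- convergence
    have hcong : ∀ ε ∈ Set.Ioi (0:ℝ),
        xe ε = x - (ε ^ 2 * (c ⬝ᵥ x) / (1 + ε ^ 2 * (c ⬝ᵥ w))) • w := fun ε hε =>
      key ε hε
    have hlim : Tendsto (fun ε : ℝ => x - (ε ^ 2 * (c ⬝ᵥ x) / (1 + ε ^ 2 * (c ⬝ᵥ w))) • w)
        (nhdsWithin 0 (Set.Ioi 0)) (nhds x) := by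
      have hc : ContinuousAt (fun ε : ℝ => x - (ε ^ 2 * (c ⬝ᵥ x) / (1 + ε ^ 2 * (c ⬝ᵥ w))) • w)
          0 := by
        apply ContinuousAt.sub continuousAt_const
        apply ContinuousAt.fun_smul ?_ continuousAt_const
        apply ContinuousAt.div
        · fun_prop
        · fun_prop
        · simp
      have h0 : (fun ε : ℝ => x - (ε ^ 2 * (c ⬝ᵥ x) / (1 + ε ^ 2 * (c ⬝ᵥ w))) • w) 0 = x := by
        simp
      have := hc.tendsto
      norm_num at this
      exact this.mono_left nhdsWithin_le_nhds
    refine Tendsto.congr' ?_ hlim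
    filter_upwards [self_mem_nhdsWithin] with ε hε
    exact (hcong ε hε).symm
end

section
/- Let A ∈ ℝ^{m×n} have full column rank n, b ∈ ℝ^m, c ∈ ℝⁿ, ε > 0, and let A_ε ∈ ℝ^{(m+1)×n} be obtained by appending the row εcᵀ below A. Let x_ε = (A_εᵀA_ε)⁻¹(Aᵀb + c), r_ε = b − Ax_ε, γ = 1 − 2εcᵀx_ε. Consider the linear map L_ε: ℝ^{m×n} × ℝ^m × ℝⁿ → ℝⁿ given by L_ε(E, f, g) = (A_εᵀA_ε)⁻¹Eᵀr_ε − (A_εᵀA_ε)⁻¹AᵀEx_ε + (A_εᵀA_ε)⁻¹Aᵀf + γ(A_εᵀA_ε)⁻¹g. Then the operator norm of L_ε with respect to the norm ‖[E, f, g]‖_F = sqrt(‖E‖_F² + ‖f‖² + ‖g‖²) on the domain and the Euclidean norm on ℝⁿ equals sqrt(‖M̄_ε‖), where M̄_ε = (γ² + ‖r_ε‖²)(A_εᵀA_ε)⁻² + (1 + ‖x_ε‖²)(A_εᵀA_ε)⁻¹AᵀA(A_εᵀA_ε)⁻¹ − 2 sym(B_ε), B_ε = (A_εᵀA_ε)⁻¹Aᵀr_ε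 x_εᵀ(A_εᵀA_ε)⁻¹, sym(B_ε) = (B_ε + B_εᵀ)/2, and ‖M̄_ε‖ is the spectral norm of M̄_ε. -/
open Matrix

/-- Spectral (Euclidean operator) norm of a matrix, as the supremum of
`‖M y‖ / ‖y‖` over nonzero `y`. -/
noncomputable def specNorm {k l : Type*} [Fintype k] [Fintype l]
    (M : Matrix k l ℝ) : ℝ :=
  sSup {t : ℝ | ∃ y : l → ℝ, y ≠ 0 ∧ t = euclNorm (M *ᵥ y) / euclNorm y}

/-! The map `L_ε` is multiplication by an explicit matrix `K` acting on the stacked perturbation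
`(vec E, f, g)`, whose Euclidean norm is `‖[E, f, g]‖_F`. Its operator norm is therefore the
spectral norm of `K`, and the C⋆-identity `‖K‖² = ‖K Kᵀ‖` reduces the theorem to the identity
`K Kᵀ = M̄_ε`, a direct computation using that `(A_εᵀA_ε)⁻¹` is symmetric. -/

theorem ContinuousLinearMap.sSup_norm_apply_div_norm_eq_norm {𝕜 E F : Type*}
    [NontriviallyNormedField 𝕜] [NormedAddCommGroup E] [NormedSpace 𝕜 E]
    [NormedAddCommGroup F] [NormedSpace 𝕜 F]
    (T : E →L[𝕜] F) :
    sSup {t : ℝ | ∃ y : E, y ≠ 0 ∧ t = ‖T y‖ / ‖y‖} = ‖T‖ := by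
  have hle : ∀ t ∈ {t : ℝ | ∃ y : E, y ≠ 0 ∧ t = ‖T y‖ / ‖y‖}, t ≤ ‖T‖ := by
    rintro t ⟨y, hy, rfl⟩
    exact div_le_of_le_mul₀ (norm_nonneg y) (norm_nonneg T) (T.le_opNorm y)
  refine le_antisymm (Real.sSup_le hle (norm_nonneg T)) ?_
  refine T.opNorm_le_bound (Real.sSup_nonneg ?_) fun y => ?_
  · rintro t ⟨y, -, rfl⟩
    positivity
  rcases eq_or_ne y 0 with rfl | hy
  · simp
  · rw [← div_le_iff₀ (norm_pos_iff.2 hy)]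
    exact le_csSup ⟨‖T‖, hle⟩ ⟨y, hy, rfl⟩

lemma euclNorm_eq_norm_toLp {k : Type*} [Fintype k] (v : k → ℝ) :
    euclNorm v = ‖WithLp.toLp 2 v‖ := by
  simp [euclNorm, EuclideanSpace.norm_eq]

section L2OpNorm

open scoped Matrix.Norms.L2Operator

variable {k l : Type*} [Fintype k] [Fintype l]

lemma specNorm_eq_l2_opNorm [DecidableEq l] (M : Matrix k l ℝ) : specNorm M = ‖M‖ := by
  rw [l2_opNorm_def, ← ContinuousLinearMap.sSup_norm_apply_div_norm_eq_norm]
  unfold specNorm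
  congr 1
  ext t
  constructor
  · rintro ⟨y, hy, rfl⟩
    refine ⟨WithLp.toLp 2 y, by simpa using hy, ?_⟩
    rw [euclNorm_eq_norm_toLp, euclNorm_eq_norm_toLp]
    rfl
  · rintro ⟨y, hy, rfl⟩
    refine ⟨y.ofLp, by simpa using hy, ?_⟩
    rw [euclNorm_eq_norm_toLp, euclNorm_eq_norm_toLp]
    rfl

lemma specNorm_eq_sqrt_specNorm_mul_transpose (M : Matrix k l ℝ) :
    specNorm M = Real.sqrt (specNorm (M * Mᵀ)) := by
  classical
  have h : ‖M * Mᵀ‖ = ‖M‖ * ‖M‖ := by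
    rw [← l2_opNorm_conjTranspose M, ← l2_opNorm_conjTranspose_mul_self Mᴴ,
      conjTranspose_conjTranspose, conjTranspose_eq_transpose_of_trivial]
  rw [specNorm_eq_l2_opNorm, specNorm_eq_l2_opNorm, h, Real.sqrt_mul_self (norm_nonneg M)]

end L2OpNorm

section Perturbation

variable {k l n : Type*}

def perturbationVec (E : Matrix k l ℝ) (f : k → ℝ) (g : l → ℝ) : (k × l) ⊕ k ⊕ l → ℝ :=
  Sum.elim (fun p => E p.1 p.2) (Sum.elim f g)

lemma perturbationVec_eq_zero_iff {E : Matrix k l ℝ} {f : k → ℝ} {g : l → ℝ} :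
    perturbationVec E f g = 0 ↔ E = 0 ∧ f = 0 ∧ g = 0 := by
  simp [perturbationVec, funext_iff, ← Matrix.ext_iff]

lemma exists_perturbationVec_eq (v : (k × l) ⊕ k ⊕ l → ℝ) :
    ∃ E f g, perturbationVec E f g = v :=
  ⟨Matrix.of fun i j => v (.inl (i, j)), v ∘ .inr ∘ .inl, v ∘ .inr ∘ .inr,
    by ext (⟨i, j⟩ | i | j) <;> rfl⟩

variable [Fintype k] [Fintype l]

lemma euclNorm_perturbationVec (E : Matrix k l ℝ) (f : k → ℝ) (g : l → ℝ) :
    euclNorm (perturbationVec E f g) =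
      Real.sqrt (frobNorm E ^ 2 + euclNorm f ^ 2 + euclNorm g ^ 2) := by
  rw [euclNorm, frobNorm, euclNorm, euclNorm, Real.sq_sqrt (by positivity),
    Real.sq_sqrt (by positivity), Real.sq_sqrt (by positivity)]
  simp [perturbationVec, Fintype.sum_sum_type, Fintype.sum_prod_type, add_assoc]

lemma sSup_perturbation_ratio_eq_specNorm [Fintype n] (K : Matrix n ((k × l) ⊕ k ⊕ l) ℝ) :
    sSup {t : ℝ | ∃ (E : Matrix k l ℝ) (f : k → ℝ) (g : l → ℝ), ¬(E = 0 ∧ f = 0 ∧ g = 0) ∧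
        t = euclNorm (K *ᵥ perturbationVec E f g)
          / Real.sqrt (frobNorm E ^ 2 + euclNorm f ^ 2 + euclNorm g ^ 2)} = specNorm K := by
  unfold specNorm
  congr 1
  ext t
  constructor
  · rintro ⟨E, f, g, h, rfl⟩
    exact ⟨_, perturbationVec_eq_zero_iff.not.2 h, by rw [euclNorm_perturbationVec]⟩
  · rintro ⟨v, hv, rfl⟩
    obtain ⟨E, f, g, rfl⟩ := exists_perturbationVec_eq v
    exact ⟨E, f, g, perturbationVec_eq_zero_iff.not.1 hv, by rw [euclNorm_perturbationVec]⟩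

variable (P : Matrix n l ℝ) (Q : Matrix n k ℝ) (r : k → ℝ) (x : l → ℝ) (γ : ℝ)

def matrixPerturbationBlock : Matrix n (k × l) ℝ :=
  of fun i p => P i p.2 * r p.1 - Q i p.1 * x p.2

lemma matrixPerturbationBlock_mulVec (E : Matrix k l ℝ) :
    matrixPerturbationBlock P Q r x *ᵥ (fun p => E p.1 p.2) =
      P *ᵥ (Eᵀ *ᵥ r) - Q *ᵥ (E *ᵥ x) := by
  ext i
  simp only [matrixPerturbationBlock, mulVec, dotProduct, Fintype.sum_prod_type, Finset.mul_sum,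
    sub_mul, Finset.sum_sub_distrib, of_apply, transpose_apply, Pi.sub_apply]
  rw [Finset.sum_comm (γ := k)]
  congr 1 <;> exact Finset.sum_congr rfl fun _ _ => Finset.sum_congr rfl fun _ _ => by ring

lemma matrixPerturbationBlock_mul_transpose :
    matrixPerturbationBlock P Q r x * (matrixPerturbationBlock P Q r x)ᵀ =
      euclNorm r ^ 2 • (P * Pᵀ) + euclNorm x ^ 2 • (Q * Qᵀ)
        - (vecMulVec (Q *ᵥ r) (P *ᵥ x) + vecMulVec (P *ᵥ x) (Q *ᵥ r)) := by
  ext i j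
  simp only [matrixPerturbationBlock, euclNorm,
    Real.sq_sqrt (Finset.sum_nonneg fun _ _ => sq_nonneg _), mul_apply, Fintype.sum_prod_type,
    of_apply, transpose_apply, Matrix.add_apply, Matrix.sub_apply,
    Matrix.smul_apply, smul_eq_mul, vecMulVec_apply, mulVec, dotProduct]
  -- order every product of sums as `∑ p : k, ∑ q : l`, like the left-hand side
  rw [mul_comm (∑ q, x q ^ 2), mul_comm (∑ q, P i q * x q)]
  simp only [Finset.sum_mul_sum, ← Finset.sum_add_distrib, ← Finset.sum_sub_distrib]
  exact Finset.sum_congr rfl fun _ _ => Finset.sum_congr rfl fun _ _ => by ring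

def perturbationMatrix : Matrix n ((k × l) ⊕ k ⊕ l) ℝ :=
  fromCols (matrixPerturbationBlock P Q r x) (fromCols Q (γ • P))

lemma perturbationMatrix_mulVec (E : Matrix k l ℝ) (f : k → ℝ) (g : l → ℝ) :
    perturbationMatrix P Q r x γ *ᵥ perturbationVec E f g =
      P *ᵥ (Eᵀ *ᵥ r) - Q *ᵥ (E *ᵥ x) + Q *ᵥ f + γ • (P *ᵥ g) := by
  rw [perturbationMatrix, perturbationVec, fromCols_mulVec_sumElim, fromCols_mulVec_sumElim,
    matrixPerturbationBlock_mulVec, smul_mulVec, add_assoc]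

lemma perturbationMatrix_mul_transpose :
    perturbationMatrix P Q r x γ * (perturbationMatrix P Q r x γ)ᵀ =
      (γ ^ 2 + euclNorm r ^ 2) • (P * Pᵀ) + (1 + euclNorm x ^ 2) • (Q * Qᵀ)
        - (vecMulVec (Q *ᵥ r) (P *ᵥ x) + vecMulVec (P *ᵥ x) (Q *ᵥ r)) := by
  rw [perturbationMatrix, transpose_fromCols, transpose_fromCols, fromCols_mul_fromRows,
    fromCols_mul_fromRows, matrixPerturbationBlock_mul_transpose, transpose_smul, smul_mul,
    Matrix.mul_smul, smul_smul]
  module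

end Perturbation

theorem stmt15_general {m n : ℕ}
    (A : Matrix (Fin m) (Fin n) ℝ)
    (Aeps : Matrix (Fin (m + 1)) (Fin n) ℝ)
    (xe : Fin n → ℝ)
    (re : Fin m → ℝ)
    (γ : ℝ)
    (Be : Matrix (Fin n) (Fin n) ℝ)
    (hBe : Be = (Aepsᵀ * Aeps)⁻¹ * Aᵀ * vecMulVec re xe * (Aepsᵀ * Aeps)⁻¹)
    (Mbar : Matrix (Fin n) (Fin n) ℝ)
    (hM : Mbar = (γ ^ 2 + euclNorm re ^ 2) • ((Aepsᵀ * Aeps)⁻¹ * (Aepsᵀ * Aeps)⁻¹)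
        + (1 + euclNorm xe ^ 2) • ((Aepsᵀ * Aeps)⁻¹ * (Aᵀ * A) * (Aepsᵀ * Aeps)⁻¹)
        - (2 : ℝ) • ((1 / 2 : ℝ) • (Be + Beᵀ))) :
    sSup {t : ℝ | ∃ (E : Matrix (Fin m) (Fin n) ℝ) (f : Fin m → ℝ) (g : Fin n → ℝ),
        ¬(E = 0 ∧ f = 0 ∧ g = 0) ∧
        t = euclNorm ((Aepsᵀ * Aeps)⁻¹ *ᵥ (Eᵀ *ᵥ re)
              - ((Aepsᵀ * Aeps)⁻¹ * Aᵀ) *ᵥ (E *ᵥ xe)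
              + ((Aepsᵀ * Aeps)⁻¹ * Aᵀ) *ᵥ f
              + γ • ((Aepsᵀ * Aeps)⁻¹ *ᵥ g))
            / Real.sqrt (frobNorm E ^ 2 + euclNorm f ^ 2 + euclNorm g ^ 2)} =
      Real.sqrt (specNorm Mbar) := by
  set S := (Aepsᵀ * Aeps)⁻¹
  have hS : Sᵀ = S := by rw [transpose_nonsing_inv, transpose_mul, transpose_transpose]
  have hBe_outer : Be = vecMulVec ((S * Aᵀ) *ᵥ re) (S *ᵥ xe) := by
    rw [hBe, mul_vecMulVec, vecMulVec_mul, ← mulVec_transpose, hS]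
  have hQQ : S * Aᵀ * (S * Aᵀ)ᵀ = S * (Aᵀ * A) * S := by
    rw [transpose_mul, hS, transpose_transpose]
    simp only [Matrix.mul_assoc]
  simp_rw [← perturbationMatrix_mulVec S (S * Aᵀ) re xe γ]
  rw [sSup_perturbation_ratio_eq_specNorm, specNorm_eq_sqrt_specNorm_mul_transpose,
    perturbationMatrix_mul_transpose, hM, hBe_outer, transpose_vecMulVec, hS, hQQ, smul_smul]
  norm_num

/-- Theorem 5.1: structured absolute condition number of the CGLSε
reformulation. The operator norm of
`L_ε(E,f,g) = (A_εᵀA_ε)⁻¹Eᵀr_ε − (A_εᵀA_ε)⁻¹AᵀEx_ε + (A_εᵀA_ε)⁻¹Aᵀf + γ(A_εᵀA_ε)⁻¹g`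
with respect to `‖[E,f,g]‖_F` on the domain and the Euclidean norm on the range equals
`sqrt(‖M̄_ε‖)`. -/
theorem stmt15 {m n : ℕ} (hn : 0 < n) (hmn : n ≤ m)
    (A : Matrix (Fin m) (Fin n) ℝ) (hA : A.rank = n)
    (b : Fin m → ℝ) (c : Fin n → ℝ) (ε : ℝ) (hε : 0 < ε)
    (Aeps : Matrix (Fin (m + 1)) (Fin n) ℝ)
    (hAeps : Aeps = Matrix.of (Fin.snoc (fun i => A i) (fun j => ε * c j)))
    (xe : Fin n → ℝ) (hxe : xe = (Aepsᵀ * Aeps)⁻¹ *ᵥ (Aᵀ *ᵥ b + c))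
    (re : Fin m → ℝ) (hre : re = b - A *ᵥ xe)
    (γ : ℝ) (hγ : γ = 1 - 2 * ε * (c ⬝ᵥ xe))
    (Be : Matrix (Fin n) (Fin n) ℝ)
    (hBe : Be = (Aepsᵀ * Aeps)⁻¹ * Aᵀ * vecMulVec re xe * (Aepsᵀ * Aeps)⁻¹)
    (Mbar : Matrix (Fin n) (Fin n) ℝ)
    (hM : Mbar = (γ ^ 2 + euclNorm re ^ 2) • ((Aepsᵀ * Aeps)⁻¹ * (Aepsᵀ * Aeps)⁻¹)
        + (1 + euclNorm xe ^ 2) • ((Aepsᵀ * Aeps)⁻¹ * (Aᵀ * A) * (Aepsᵀ * Aeps)⁻¹)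
        - (2 : ℝ) • ((1 / 2 : ℝ) • (Be + Beᵀ))) :
    sSup {t : ℝ | ∃ (E : Matrix (Fin m) (Fin n) ℝ) (f : Fin m → ℝ) (g : Fin n → ℝ),
        ¬(E = 0 ∧ f = 0 ∧ g = 0) ∧
        t = euclNorm ((Aepsᵀ * Aeps)⁻¹ *ᵥ (Eᵀ *ᵥ re)
              - ((Aepsᵀ * Aeps)⁻¹ * Aᵀ) *ᵥ (E *ᵥ xe)
              + ((Aepsᵀ * Aeps)⁻¹ * Aᵀ) *ᵥ f
              + γ • ((Aepsᵀ * Aeps)⁻¹ *ᵥ g))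
            / Real.sqrt (frobNorm E ^ 2 + euclNorm f ^ 2 + euclNorm g ^ 2)} =
      Real.sqrt (specNorm Mbar) :=
  stmt15_general A Aeps xe re γ Be hBe Mbar hM
end
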